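/- arXiv:cs/0505076 — 2 statements merged into one kernel-verified Lean document; each statement's English description precedes it below -/
import Mathlib

section
/- Let π be a permutation of {1, …, m} with h_{π(i)π(k)} = h_{ik} for all i, k, and let t ↦ X(t) be a solution of the system on ℝ with initial conditions x_i(0) = e_i and x_i′(0) = 0 for all i. Assume the initial value problem has a unique solution, i.e. every solution of the system on ℝ with these initial conditions equals X. Then for all t ∈ ℝ and all i, j one has x_{π(i)}(t)(π(j)) = x_i(t)(j); in particular, for every vertex i the coordinate tuple x_{π(i)}(t) is a permutation of the coordinate tuple x_i(t), so automorphism-equivalent vertices have permutation-equivalent rows of coordinates at every time. -/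
/-- The force acting on the `i`-th point of a configuration `X` of `m` points of `ℝ^m`,
for the adjacency matrix `h`:  `F_i(X) = ∑_{k ≠ i} (x_i − x_k)·(1/‖x_i − x_k‖² − h_{ik})`. -/
noncomputable def force (m : ℕ) (h : Matrix (Fin m) (Fin m) ℝ)
    (X : Fin m → EuclideanSpace ℝ (Fin m)) (i : Fin m) : EuclideanSpace ℝ (Fin m) :=
  ∑ k ∈ Finset.univ.filter (fun k => k ≠ i), (1 / ‖X i - X k‖ ^ 2 - h i k) • (X i - X k)

/-- `X : ℝ → (ℝ^m)^m` is a solution of the system `x_i″ = F_i(X)` on the set `S ⊆ ℝ`: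
its points are pairwise distinct at every `t ∈ S`, it is differentiable at every `t ∈ S`,
and its velocity `deriv` has derivative `F_i(X(t))` at every `t ∈ S`. -/
def IsSolution (m : ℕ) (h : Matrix (Fin m) (Fin m) ℝ) (S : Set ℝ)
    (X : ℝ → Fin m → EuclideanSpace ℝ (Fin m)) : Prop :=
  (∀ t ∈ S, ∀ i k : Fin m, i ≠ k → X t i ≠ X t k) ∧
  (∀ i : Fin m, ∀ t ∈ S, DifferentiableAt ℝ (fun s => X s i) t) ∧
  (∀ i : Fin m, ∀ t ∈ S, HasDerivAt (deriv (fun s => X s i)) (force m h (X t) i) t)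

/-- Kinetic energy of a tuple of velocities: `E_k(Y) = (1/2) ∑_r ‖y_r‖²`. -/
noncomputable def kineticEnergy (m : ℕ) (Y : Fin m → EuclideanSpace ℝ (Fin m)) : ℝ :=
  (1 / 2) * ∑ r, ‖Y r‖ ^ 2

/-- Potential energy of a configuration:
`E_p(X) = −(1/2) ∑_{r<s} (log ‖x_r − x_s‖² − h_{rs}‖x_r − x_s‖²)`. -/
noncomputable def potentialEnergy (m : ℕ) (h : Matrix (Fin m) (Fin m) ℝ)
    (X : Fin m → EuclideanSpace ℝ (Fin m)) : ℝ :=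
  -(1 / 2) * ∑ p ∈ Finset.univ.filter (fun p : Fin m × Fin m => p.1 < p.2),
      (Real.log (‖X p.1 - X p.2‖ ^ 2) - h p.1 p.2 * ‖X p.1 - X p.2‖ ^ 2)

section

variable {m : ℕ} {h : Matrix (Fin m) (Fin m) ℝ}

theorem force_comp_linearIsometry (T : EuclideanSpace ℝ (Fin m) →ₗᵢ[ℝ] EuclideanSpace ℝ (Fin m))
    (X : Fin m → EuclideanSpace ℝ (Fin m)) (i : Fin m) :
    force m h (fun k => T (X k)) i = T (force m h X i) := by
  simp only [force, map_sum, map_smul, ← map_sub, T.norm_map]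

theorem force_comp_perm {π : Equiv.Perm (Fin m)} (hπ : ∀ i k, h (π i) (π k) = h i k)
    (X : Fin m → EuclideanSpace ℝ (Fin m)) (i : Fin m) :
    force m h (fun k => X (π k)) i = force m h X (π i) := by
  unfold force
  refine Finset.sum_nbij' π π.symm (by simp) (by simp [Equiv.symm_apply_eq])
    (by simp) (by simp) fun k _ => by rw [hπ]

theorem ContinuousLinearEquiv.deriv_comp {𝕜 E F : Type*} [NontriviallyNormedField 𝕜]
    [NormedAddCommGroup E] [NormedSpace 𝕜 E] [NormedAddCommGroup F] [NormedSpace 𝕜 F]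
    (T : E ≃L[𝕜] F) (f : 𝕜 → E) (t : 𝕜) :
    deriv (fun s => T (f s)) t = T (deriv f t) :=
  congrArg (· 1) (T.comp_fderiv (f := f))

namespace IsSolution

variable {S : Set ℝ} {X : ℝ → Fin m → EuclideanSpace ℝ (Fin m)}

theorem comp_perm {π : Equiv.Perm (Fin m)} (hπ : ∀ i k, h (π i) (π k) = h i k)
    (hX : IsSolution m h S X) : IsSolution m h S (fun t i => X t (π i)) := by
  obtain ⟨hdist, hdiff, hacc⟩ := hX
  refine ⟨fun t ht i k hik => hdist t ht _ _ (π.injective.ne hik), fun i => hdiff (π i),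
    fun i t ht => ?_⟩
  rw [force_comp_perm hπ]
  exact hacc (π i) t ht

theorem map_linearIsometryEquiv
    (T : EuclideanSpace ℝ (Fin m) ≃ₗᵢ[ℝ] EuclideanSpace ℝ (Fin m))
    (hX : IsSolution m h S X) : IsSolution m h S (fun t i => T (X t i)) := by
  obtain ⟨hdist, hdiff, hacc⟩ := hX
  refine ⟨fun t ht i k hik => T.injective.ne (hdist t ht i k hik),
    fun i t ht => T.differentiableAt.comp t (hdiff i t ht), fun i t ht => ?_⟩
  have hvel : deriv (fun s => T (X s i)) = fun s => T (deriv (fun s => X s i) s) :=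
    funext (T.toContinuousLinearEquiv.deriv_comp fun s => X s i)
  have hforce : force m h (fun k => T (X t k)) i = T (force m h (X t) i) :=
    force_comp_linearIsometry T.toLinearIsometry (X t) i
  rw [hvel, hforce]
  exact T.toContinuousLinearEquiv.hasFDerivAt.comp_hasDerivAt t (hacc i t ht)

end IsSolution

end

theorem automorphism_rows_permutation_equivalent_general (m : ℕ)
    (h : Matrix (Fin m) (Fin m) ℝ)
    (π : Equiv.Perm (Fin m)) (hπ : ∀ i k, h (π i) (π k) = h i k)
    (X : ℝ → Fin m → EuclideanSpace ℝ (Fin m))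
    (hX : IsSolution m h Set.univ X)
    (hX0 : ∀ i, X 0 i = EuclideanSpace.single i (1 : ℝ))
    (hX0' : ∀ i, deriv (fun t => X t i) 0 = 0)
    (huniq : ∀ Y : ℝ → Fin m → EuclideanSpace ℝ (Fin m),
      IsSolution m h Set.univ Y → (∀ i, Y 0 i = EuclideanSpace.single i (1 : ℝ)) →
        (∀ i, deriv (fun t => Y t i) 0 = 0) → Y = X) :
    (∀ t : ℝ, ∀ i j : Fin m, X t (π i) (π j) = X t i j) ∧
      ∀ t : ℝ, ∀ i : Fin m, ∃ σ : Equiv.Perm (Fin m),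
        ∀ j : Fin m, X t (π i) (σ j) = X t i j := by
  -- Relabelling the points by `π` and the coordinates by `π⁻¹` maps the solution to a
  -- solution of the same initial value problem, hence to itself.
  set P := LinearIsometryEquiv.piLpCongrLeft 2 ℝ ℝ π.symm
  have hP : ∀ (v : EuclideanSpace ℝ (Fin m)) j, P v j = v (π j) := fun v j => rfl
  have hsymm : (fun t i => P (X t (π i))) = X := by
    refine huniq _ ((hX.comp_perm hπ).map_linearIsometryEquiv P) (fun i => ?_) (fun i => ?_)
    · rw [hX0, EuclideanSpace.piLpCongrLeft_single, Equiv.symm_apply_apply]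
    · exact (P.toContinuousLinearEquiv.deriv_comp _ 0).trans (by rw [hX0', map_zero])
  have hrows : ∀ t i j, X t (π i) (π j) = X t i j := fun t i j => by
    rw [← hP, congrFun₂ hsymm t i]
  exact ⟨hrows, fun t i => ⟨π, hrows t i⟩⟩

/-- If `π` is an automorphism of the adjacency matrix `h`, `X` is a solution of the system on
`ℝ` with initial conditions `x_i(0) = e_i`, `x_i′(0) = 0`, and this initial value problem has
a unique solution, then `x_{π(i)}(t)(π(j)) = x_i(t)(j)` for all `t, i, j`; in particular the
row of coordinates of `x_{π(i)}(t)` is a permutation of the row of coordinates of `x_i(t)`. -/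
theorem automorphism_rows_permutation_equivalent (m : ℕ) (hm : 2 ≤ m)
    (h : Matrix (Fin m) (Fin m) ℝ)
    (hsymm : ∀ i k, h i k = h k i) (hdiag : ∀ i, h i i = 0)
    (h01 : ∀ i k, h i k = 0 ∨ h i k = 1)
    (π : Equiv.Perm (Fin m)) (hπ : ∀ i k, h (π i) (π k) = h i k)
    (X : ℝ → Fin m → EuclideanSpace ℝ (Fin m))
    (hX : IsSolution m h Set.univ X)
    (hX0 : ∀ i, X 0 i = EuclideanSpace.single i (1 : ℝ))
    (hX0' : ∀ i, deriv (fun t => X t i) 0 = 0)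
    (huniq : ∀ Y : ℝ → Fin m → EuclideanSpace ℝ (Fin m),
      IsSolution m h Set.univ Y → (∀ i, Y 0 i = EuclideanSpace.single i (1 : ℝ)) →
        (∀ i, deriv (fun t => Y t i) 0 = 0) → Y = X) :
    (∀ t : ℝ, ∀ i j : Fin m, X t (π i) (π j) = X t i j) ∧
      ∀ t : ℝ, ∀ i : Fin m, ∃ σ : Equiv.Perm (Fin m),
        ∀ j : Fin m, X t (π i) (σ j) = X t i j :=
  automorphism_rows_permutation_equivalent_general m h π hπ X hX hX0 hX0' huniq
end

section
/- Suppose t ↦ X(t) is a solution of the system on the half-open interval [t0, β) with β < +∞. Then the solution together with its velocity is bounded: there exists D > 0 such that for all t ∈ [t0, β), ∑_{r} ‖x_r(t)‖² + ∑_{r} ‖x_r′(t)‖² < D². -/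
open Finset Set
open scoped RealInnerProductSpace

theorem Finset.sum_filter_ne_eq_sum_filter_lt {ι M : Type*} [Fintype ι] [LinearOrder ι]
    [AddCommMonoid M] (g : ι → ι → M) :
    ∑ i, ∑ j ∈ univ.filter (· ≠ i), g i j
      = ∑ p ∈ univ.filter (fun p : ι × ι => p.1 < p.2), (g p.1 p.2 + g p.2 p.1) := by
  have split : ∀ i, ∑ j ∈ univ.filter (· ≠ i), g i j
      = (∑ j ∈ univ.filter (i < ·), g i j) + ∑ j ∈ univ.filter (· < i), g i j := by
    intro i
    rw [← sum_union (disjoint_filter.2 fun j _ h₁ h₂ => lt_asymm h₁ h₂)]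
    refine sum_congr ?_ fun _ _ => rfl
    ext j
    simpa only [mem_union, mem_filter, mem_univ, true_and] using ne_iff_lt_or_gt.trans or_comm
  simp_rw [split, sum_add_distrib, sum_filter, ← Fintype.sum_prod_type']
  congr 1
  exact Fintype.sum_equiv (Equiv.prodComm ι ι) _ _ fun _ => rfl

theorem hasDerivAt_sum_norm_sq {ι E : Type*} [Fintype ι] [NormedAddCommGroup E]
    [InnerProductSpace ℝ E] {Y : ℝ → ι → E} {V : ι → E} {t : ℝ}
    (hY : ∀ i, HasDerivAt (fun s => Y s i) (V i) t) :
    HasDerivAt (fun s => ∑ i, ‖Y s i‖ ^ 2) (∑ i, 2 * ⟪Y t i, V i⟫) t :=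
  HasDerivAt.fun_sum fun i _ => (hY i).norm_sq

theorem sum_two_mul_inner_le {ι E : Type*} [Fintype ι] [NormedAddCommGroup E]
    [InnerProductSpace ℝ E] (Y V : ι → E) :
    ∑ i, 2 * ⟪Y i, V i⟫ ≤ ∑ i, ‖Y i‖ ^ 2 + ∑ i, ‖V i‖ ^ 2 := by
  rw [← sum_add_distrib]
  gcongr with i
  calc 2 * ⟪Y i, V i⟫ ≤ 2 * (‖Y i‖ * ‖V i‖) := by gcongr; exact real_inner_le_norm _ _
    _ ≤ ‖Y i‖ ^ 2 + ‖V i‖ ^ 2 := by rw [← mul_assoc]; exact two_mul_le_add_sq _ _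

theorem eq_of_hasDerivAt_zero_Ico {f : ℝ → ℝ} {a b : ℝ} (hf : ∀ x ∈ Ico a b, HasDerivAt f 0 x) :
    ∀ x ∈ Ico a b, f x = f a := by
  intro x hx
  have hsub : Icc a x ⊆ Ico a b := Icc_subset_Ico_right hx.2
  exact constant_of_has_deriv_right_zero
    (fun y hy => (hf y (hsub hy)).continuousAt.continuousWithinAt)
    (fun y hy => (hf y (hsub (Ico_subset_Icc_self hy))).hasDerivWithinAt) x
    (right_mem_Icc.2 hx.1)

theorem bddAbove_image_Ico_of_deriv_le_linear {f f' : ℝ → ℝ} {a b K ε : ℝ}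
    (hf : ∀ x ∈ Ico a b, HasDerivAt f (f' x) x) (bound : ∀ x ∈ Ico a b, f' x ≤ K * f x + ε) :
    BddAbove (f '' Ico a b) := by
  have hG : Continuous fun x => gronwallBound (f a) K ε (x - a) :=
    continuous_iff_continuousAt.2 fun x => (hasDerivAt_gronwallBound_shift _ _ _ x a).continuousAt
  obtain ⟨B, hB⟩ := (isCompact_Icc (a := a) (b := b)).bddAbove_image hG.continuousOn
  refine ⟨B, ?_⟩
  rintro _ ⟨x, hx, rfl⟩
  have hsub : Icc a x ⊆ Ico a b := Icc_subset_Ico_right hx.2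
  have hGronwall := le_gronwallBound_of_liminf_deriv_right_le
    (fun y hy => (hf y (hsub hy)).continuousAt.continuousWithinAt)
    (fun y hy _ hr =>
      (hf y (hsub (Ico_subset_Icc_self hy))).hasDerivWithinAt.liminf_right_slope_le hr)
    le_rfl (fun y hy => bound y (hsub (Ico_subset_Icc_self hy))) x (right_mem_Icc.2 hx.1)
  exact hGronwall.trans (hB ⟨x, Ico_subset_Icc_self hx, rfl⟩)

section Energy

variable {m : ℕ} {h : Matrix (Fin m) (Fin m) ℝ}

noncomputable def energy (m : ℕ) (h : Matrix (Fin m) (Fin m) ℝ)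
    (X : ℝ → Fin m → EuclideanSpace ℝ (Fin m)) (t : ℝ) : ℝ :=
  kineticEnergy m (fun r => deriv (fun s => X s r) t) + potentialEnergy m h (X t)

theorem sum_inner_force (hsymm : ∀ i k, h i k = h k i) (Y V : Fin m → EuclideanSpace ℝ (Fin m)) :
    ∑ r, ⟪V r, force m h Y r⟫
      = ∑ p ∈ univ.filter (fun p : Fin m × Fin m => p.1 < p.2),
          (1 / ‖Y p.1 - Y p.2‖ ^ 2 - h p.1 p.2) * ⟪Y p.1 - Y p.2, V p.1 - V p.2⟫ := by
  simp only [force, inner_sum, real_inner_smul_right]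
  rw [Finset.sum_filter_ne_eq_sum_filter_lt]
  refine sum_congr rfl fun p _ => ?_
  rw [norm_sub_rev (Y p.2), hsymm p.2 p.1]
  simp only [inner_sub_right, real_inner_comm (V _)]
  ring

theorem hasDerivAt_kineticEnergy {V : ℝ → Fin m → EuclideanSpace ℝ (Fin m)}
    {A : Fin m → EuclideanSpace ℝ (Fin m)} {t : ℝ}
    (hV : ∀ r, HasDerivAt (fun s => V s r) (A r) t) :
    HasDerivAt (fun s => kineticEnergy m (V s)) (∑ r, ⟪V t r, A r⟫) t := by
  refine ((hasDerivAt_sum_norm_sq hV).const_mul (1 / 2 : ℝ)).congr_deriv ?_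
  rw [mul_sum]
  exact sum_congr rfl fun r _ => by ring

theorem hasDerivAt_potentialEnergy {Y : ℝ → Fin m → EuclideanSpace ℝ (Fin m)}
    {V : Fin m → EuclideanSpace ℝ (Fin m)} {t : ℝ} (hdist : Pairwise fun i k => Y t i ≠ Y t k)
    (hY : ∀ r, HasDerivAt (fun s => Y s r) (V r) t) :
    HasDerivAt (fun s => potentialEnergy m h (Y s))
      (-∑ p ∈ univ.filter (fun p : Fin m × Fin m => p.1 < p.2),
          (1 / ‖Y t p.1 - Y t p.2‖ ^ 2 - h p.1 p.2) * ⟪Y t p.1 - Y t p.2, V p.1 - V p.2⟫) t := by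
  have hterm : ∀ p ∈ univ.filter (fun p : Fin m × Fin m => p.1 < p.2),
      HasDerivAt (fun s => Real.log (‖Y s p.1 - Y s p.2‖ ^ 2) - h p.1 p.2 * ‖Y s p.1 - Y s p.2‖ ^ 2)
        (2 * ((1 / ‖Y t p.1 - Y t p.2‖ ^ 2 - h p.1 p.2) *
          ⟪Y t p.1 - Y t p.2, V p.1 - V p.2⟫)) t := by
    intro p hp
    have hne : ‖Y t p.1 - Y t p.2‖ ^ 2 ≠ 0 := by
      simpa [sub_eq_zero] using hdist (mem_filter.1 hp).2.ne
    have hsq := ((hY p.1).fun_sub (hY p.2)).norm_sq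
    refine ((hsq.log hne).sub (hsq.const_mul (h p.1 p.2))).congr_deriv ?_
    field_simp
  refine ((HasDerivAt.fun_sum hterm).const_mul (-(1 / 2) : ℝ)).congr_deriv ?_
  rw [mul_sum, ← sum_neg_distrib]
  exact sum_congr rfl fun p _ => by ring

theorem IsSolution.hasDerivAt_energy {S : Set ℝ} {X : ℝ → Fin m → EuclideanSpace ℝ (Fin m)}
    (hsymm : ∀ i k, h i k = h k i) (hX : IsSolution m h S X) {t : ℝ} (ht : t ∈ S) :
    HasDerivAt (energy m h X) 0 t := by
  obtain ⟨hdist, hdiff, hforce⟩ := hX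
  have hkin := hasDerivAt_kineticEnergy (fun r => hforce r t ht)
  have hpot := hasDerivAt_potentialEnergy (h := h) (fun i k hik => hdist t ht i k hik)
    (fun r => (hdiff r t ht).hasDerivAt)
  rw [sum_inner_force hsymm] at hkin
  exact (hkin.add hpot).congr_deriv (add_neg_cancel _)

theorem neg_potentialEnergy_le (hh : ∀ i k, 0 ≤ h i k) (Y : Fin m → EuclideanSpace ℝ (Fin m)) :
    -potentialEnergy m h Y ≤ 2 * m ^ 2 * ∑ r, ‖Y r‖ ^ 2 := by
  set Q := ∑ r, ‖Y r‖ ^ 2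
  have hterm : ∀ p ∈ univ.filter (fun p : Fin m × Fin m => p.1 < p.2),
      Real.log (‖Y p.1 - Y p.2‖ ^ 2) - h p.1 p.2 * ‖Y p.1 - Y p.2‖ ^ 2 ≤ 4 * Q := by
    intro p _
    -- `log d² - h d² ≤ d² ≤ (‖x_i‖ + ‖x_j‖)² ≤ 4 Q`, using `h ≥ 0`
    have hsingle : ∀ r, ‖Y r‖ ^ 2 ≤ Q := fun r =>
      single_le_sum (fun i _ => sq_nonneg ‖Y i‖) (mem_univ r)
    have hlog := Real.log_le_self (sq_nonneg ‖Y p.1 - Y p.2‖)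
    have htri := norm_sub_le (Y p.1) (Y p.2)
    nlinarith [mul_nonneg (hh p.1 p.2) (sq_nonneg ‖Y p.1 - Y p.2‖), norm_nonneg (Y p.1 - Y p.2),
      hsingle p.1, hsingle p.2, sq_nonneg (‖Y p.1‖ - ‖Y p.2‖)]
  have hcard : (#(univ.filter (fun p : Fin m × Fin m => p.1 < p.2)) : ℝ) ≤ m ^ 2 := by
    exact_mod_cast (card_filter_le _ _).trans (by simp [sq])
  have hQ : 0 ≤ Q := sum_nonneg fun r _ => sq_nonneg _
  have hsum := sum_le_card_nsmul _ _ _ hterm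
  rw [nsmul_eq_mul] at hsum
  unfold potentialEnergy
  nlinarith

theorem IsSolution.sum_norm_deriv_sq_le {t₀ β t : ℝ} {X : ℝ → Fin m → EuclideanSpace ℝ (Fin m)}
    (hsymm : ∀ i k, h i k = h k i) (hh : ∀ i k, 0 ≤ h i k) (hX : IsSolution m h (Ico t₀ β) X)
    (ht : t ∈ Ico t₀ β) :
    ∑ r, ‖deriv (fun s => X s r) t‖ ^ 2 ≤ 2 * energy m h X t₀ + 4 * m ^ 2 * ∑ r, ‖X t r‖ ^ 2 := by
  have hconst := eq_of_hasDerivAt_zero_Ico (fun s hs => hX.hasDerivAt_energy hsymm hs) t ht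
  have hpot := neg_potentialEnergy_le hh (X t)
  rw [← hconst, energy, kineticEnergy]
  linarith

end Energy

theorem solution_bounded_on_Ico_general (m : ℕ) (h : Matrix (Fin m) (Fin m) ℝ)
    (hsymm : ∀ i k, h i k = h k i)
    (h01 : ∀ i k, h i k = 0 ∨ h i k = 1)
    (t₀ β : ℝ) (X : ℝ → Fin m → EuclideanSpace ℝ (Fin m))
    (hX : IsSolution m h (Set.Ico t₀ β) X) :
    ∃ D > (0 : ℝ), ∀ t ∈ Set.Ico t₀ β,
      (∑ r, ‖X t r‖ ^ 2) + ∑ r, ‖deriv (fun s => X s r) t‖ ^ 2 < D ^ 2 := by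
  have hh : ∀ i k, 0 ≤ h i k := fun i k => by
    rcases h01 i k with hik | hik <;> simp [hik]
  set E₀ := energy m h X t₀
  set Q : ℝ → ℝ := fun s => ∑ r, ‖X s r‖ ^ 2
  have hQ' : ∀ t ∈ Ico t₀ β, HasDerivAt Q (∑ r, 2 * ⟪X t r, deriv (fun s => X s r) t⟫) t :=
    fun t ht => hasDerivAt_sum_norm_sq fun r => (hX.2.1 r t ht).hasDerivAt
  have hgrowth : ∀ t ∈ Ico t₀ β,
      ∑ r, 2 * ⟪X t r, deriv (fun s => X s r) t⟫ ≤ (1 + 4 * m ^ 2) * Q t + 2 * E₀ := fun t ht => by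
    linarith [sum_two_mul_inner_le (X t) fun r => deriv (fun s => X s r) t,
      hX.sum_norm_deriv_sq_le hsymm hh ht]
  obtain ⟨B, hB⟩ := bddAbove_image_Ico_of_deriv_le_linear hQ' hgrowth
  refine ⟨|B + 2 * E₀ + 4 * m ^ 2 * B| + 1, by positivity, fun t ht => ?_⟩
  have hQt : Q t ≤ B := hB (mem_image_of_mem Q ht)
  have hVt := hX.sum_norm_deriv_sq_le hsymm hh ht
  have hQ0 : 0 ≤ Q t := sum_nonneg fun r _ => sq_nonneg _
  nlinarith [le_abs_self (B + 2 * E₀ + 4 * m ^ 2 * B), abs_nonneg (B + 2 * E₀ + 4 * m ^ 2 * B)]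

/-- A solution of the system on `[t₀, β)` with `β < +∞` is bounded together with its
velocity: there is `D > 0` with `∑_r ‖x_r(t)‖² + ∑_r ‖x_r′(t)‖² < D²` on `[t₀, β)`. -/
theorem solution_bounded_on_Ico (m : ℕ) (hm : 2 ≤ m) (h : Matrix (Fin m) (Fin m) ℝ)
    (hsymm : ∀ i k, h i k = h k i) (hdiag : ∀ i, h i i = 0)
    (h01 : ∀ i k, h i k = 0 ∨ h i k = 1)
    (t₀ β : ℝ) (X : ℝ → Fin m → EuclideanSpace ℝ (Fin m))
    (hX : IsSolution m h (Set.Ico t₀ β) X) :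
    ∃ D > (0 : ℝ), ∀ t ∈ Set.Ico t₀ β,
      (∑ r, ‖X t r‖ ^ 2) + ∑ r, ‖deriv (fun s => X s r) t‖ ^ 2 < D ^ 2 :=
  solution_bounded_on_Ico_general m h hsymm h01 t₀ β X hX
end
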